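/- Let n ≥ 2, p > 2 real, c ∈ (0, 1/2], and let A be the 2n×n matrix with cyclic rows e_i − e_{i+1} and e_i + e_{i+1}. If y ∈ R^n satisfies ‖y‖_p^p = n and min over x ∈ {−1,1}^n of ‖y − x‖_∞ ≥ c, then ‖Ay‖_p^p ≤ n·2^p − (3(p−2)/(2^p n^2)) c^2. -/

import Mathlib

/-!
Write `a = |y i|`, `b = |y (i + 1)|`. The two rows of `A` at `i` contribute
`|y i - y (i + 1)| ^ p + |y i + y (i + 1)| ^ p = (a + b) ^ p + |a - b| ^ p`, and a Clarkson-type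
inequality bounds this by `2 ^ (p - 1) (a ^ p + b ^ p)` minus the explicit deficit
`(p - 2) 2 ^ p ((a + b) / 2) ^ (p - 2) ((a - b) / 2) ^ 2`. Summing over the cycle gives `n 2 ^ p`
minus the deficit of any single edge. Since `y` is `c`-far from every sign vector and
`∑ |y i| ^ p = n`, some `|y k| ≥ 1` and some `|y j| ≤ |y k| - c`; walking around the cycle from `k`
to `j`, the first drop by `c` happens within at most `n` steps, so there is an edge with
`a ≥ 1 - c ≥ 1 / 2` and `a - b ≥ c / n`, whose deficit is at least
`4 (p - 2) c ^ 2 / (2 ^ p n ^ 2)`.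
-/

open Finset

section Clarkson

variable {p : ℝ}

lemma two_add_mul_sq_le_one_add_rpow_add_one_sub_rpow (hp : 2 ≤ p) {x : ℝ} (hx0 : 0 ≤ x)
    (hx1 : x ≤ 1) : 2 + p ^ 2 / 2 * x ^ 2 ≤ (1 + x) ^ p + (1 - x) ^ p := by
  let Φ : ℝ → ℝ := fun t => (1 + t) ^ p + (1 - t) ^ p - p ^ 2 / 2 * t ^ 2
  let Φ' : ℝ → ℝ := fun t => p * ((1 + t) ^ (p - 1) - (1 - t) ^ (p - 1)) - p ^ 2 * t
  have hΦ' : ∀ t ∈ Set.Ioo (0 : ℝ) 1, HasDerivAt Φ (Φ' t) t := by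
    intro t ⟨ht0, ht1⟩
    have h1 := ((hasDerivAt_id t).const_add 1).rpow_const (p := p) (Or.inr (by linarith))
    have h2 := ((hasDerivAt_id t).const_sub 1).rpow_const (p := p) (Or.inr (by linarith))
    have h3 := (hasDerivAt_pow 2 t).const_mul (p ^ 2 / 2)
    refine ((h1.add h2).sub h3).congr_deriv ?_
    simp only [Φ', id]
    ring
  have hΦ'_nonneg : ∀ t ∈ Set.Ioo (0 : ℝ) 1, 0 ≤ Φ' t := by
    intro t ⟨ht0, ht1⟩
    have hbern : 1 + (p - 1) * t ≤ (1 + t) ^ (p - 1) :=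
      one_add_mul_self_le_rpow_one_add (by linarith) (by linarith)
    have hsmall : (1 - t) ^ (p - 1) ≤ 1 - t := by
      simpa using Real.rpow_le_rpow_of_exponent_ge (by linarith : (0 : ℝ) < 1 - t)
        (by linarith : 1 - t ≤ 1) (by linarith : 1 ≤ p - 1)
    have : p * t ≤ (1 + t) ^ (p - 1) - (1 - t) ^ (p - 1) := by linarith
    nlinarith
  have hcont : ContinuousOn Φ (Set.Icc 0 1) := by
    refine ContinuousOn.sub (ContinuousOn.add ?_ ?_) (by fun_prop) <;>
      exact ContinuousOn.rpow_const (by fun_prop) fun _ _ => Or.inr (by linarith)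
  have hmono : MonotoneOn Φ (Set.Icc 0 1) := by
    refine monotoneOn_of_hasDerivWithinAt_nonneg (f' := Φ') (convex_Icc 0 1) hcont
      (fun t ht => ?_) (fun t ht => ?_) <;> rw [interior_Icc] at ht
    · exact (hΦ' t ht).hasDerivWithinAt
    · exact hΦ'_nonneg t ht
  have := hmono ⟨le_rfl, zero_le_one⟩ ⟨hx0, hx1⟩ hx0
  simp only [Φ, add_zero, sub_zero, Real.one_rpow] at this
  linarith

lemma two_add_two_mul_rpow_add_le_one_add_rpow_add_one_sub_rpow (hp : 2 ≤ p) {x : ℝ}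
    (hx0 : 0 ≤ x) (hx1 : x ≤ 1) :
    2 + 2 * x ^ p + 2 * (p - 2) * x ^ 2 ≤ (1 + x) ^ p + (1 - x) ^ p := by
  have hxp : x ^ p ≤ x ^ 2 := by
    simpa using Real.rpow_le_rpow_of_exponent_ge' hx0 hx1 (by norm_num) hp
  nlinarith [two_add_mul_sq_le_one_add_rpow_add_one_sub_rpow hp hx0 hx1,
    mul_nonneg (sq_nonneg (p - 2)) (sq_nonneg x)]

noncomputable def clarksonDeficit (p a b : ℝ) : ℝ :=
  (p - 2) * 2 ^ p * ((a + b) / 2) ^ (p - 2) * ((a - b) / 2) ^ 2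

lemma clarksonDeficit_comm (p a b : ℝ) : clarksonDeficit p a b = clarksonDeficit p b a := by
  unfold clarksonDeficit
  rw [add_comm b]
  ring

lemma clarksonDeficit_nonneg (hp : 2 ≤ p) {a b : ℝ} (ha : 0 ≤ a) (hb : 0 ≤ b) :
    0 ≤ clarksonDeficit p a b := by
  have : 0 ≤ p - 2 := by linarith
  unfold clarksonDeficit
  positivity

lemma add_rpow_add_abs_sub_rpow_add_clarksonDeficit_le (hp : 2 ≤ p) {a b : ℝ} (ha : 0 ≤ a)
    (hb : 0 ≤ b) :
    (a + b) ^ p + |a - b| ^ p + clarksonDeficit p a b ≤ 2 ^ (p - 1) * (a ^ p + b ^ p) := by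
  wlog hba : b ≤ a generalizing a b
  · have := this hb ha (le_of_not_ge hba)
    rwa [add_comm b, abs_sub_comm, clarksonDeficit_comm, add_comm (b ^ p)] at this
  have hp0 : p ≠ 0 := by positivity
  rcases (add_nonneg ha hb).eq_or_lt with hab | hab
  · obtain ⟨rfl, rfl⟩ : a = 0 ∧ b = 0 := ⟨by linarith, by linarith⟩
    simp [clarksonDeficit, Real.zero_rpow hp0]
  obtain ⟨μ, x, hμ, hx0, hx1, rfl, rfl⟩ :
      ∃ μ x, 0 < μ ∧ 0 ≤ x ∧ x ≤ 1 ∧ a = μ * (1 + x) ∧ b = μ * (1 - x) := by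
    refine ⟨(a + b) / 2, (a - b) / (a + b), by positivity, by apply div_nonneg <;> linarith,
      (div_le_one hab).2 (by linarith), ?_, ?_⟩ <;> field_simp <;> ring
  have h2 : (2 : ℝ) ^ p = 2 * 2 ^ (p - 1) := by
    rw [Real.rpow_sub_one two_ne_zero]
    ring
  have hμp : μ ^ (p - 2) * μ ^ 2 = μ ^ p := by
    rw [← Real.rpow_natCast, ← Real.rpow_add hμ]
    norm_num
  have hkey := mul_le_mul_of_nonneg_left
    (two_add_two_mul_rpow_add_le_one_add_rpow_add_one_sub_rpow hp hx0 hx1)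
    (by positivity : 0 ≤ 2 ^ (p - 1) * μ ^ p)
  calc (μ * (1 + x) + μ * (1 - x)) ^ p + |μ * (1 + x) - μ * (1 - x)| ^ p
        + clarksonDeficit p (μ * (1 + x)) (μ * (1 - x))
      = (2 * μ) ^ p + (2 * μ * x) ^ p + (p - 2) * 2 ^ p * (μ ^ (p - 2) * μ ^ 2) * x ^ 2 := by
        rw [abs_of_nonneg (by nlinarith)]
        unfold clarksonDeficit
        ring_nf
    _ = 2 ^ (p - 1) * μ ^ p * (2 + 2 * x ^ p + 2 * (p - 2) * x ^ 2) := by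
        rw [Real.mul_rpow (by norm_num) (by positivity), Real.mul_rpow (by positivity) hx0,
          Real.mul_rpow (by norm_num) hμ.le, hμp, h2]
        ring
    _ ≤ 2 ^ (p - 1) * μ ^ p * ((1 + x) ^ p + (1 - x) ^ p) := hkey
    _ = 2 ^ (p - 1) * ((μ * (1 + x)) ^ p + (μ * (1 - x)) ^ p) := by
        rw [Real.mul_rpow hμ.le (by linarith), Real.mul_rpow hμ.le (by linarith)]
        ring

end Clarkson

lemma abs_sub_rpow_add_abs_add_rpow (p u w : ℝ) :
    |u - w| ^ p + |u + w| ^ p = (|u| + |w|) ^ p + |(|u| - |w|)| ^ p := by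
  wlog hu : 0 ≤ u generalizing u
  · have := this (-u) (by linarith)
    rwa [abs_neg, ← neg_add', abs_neg, neg_add_eq_sub, abs_sub_comm, add_comm (|u + w| ^ p)] at this
  wlog hw : 0 ≤ w generalizing w
  · have := this (-w) (by linarith)
    rwa [abs_neg, sub_neg_eq_add, ← sub_eq_add_neg, add_comm (|u + w| ^ p)] at this
  rw [abs_of_nonneg hu, abs_of_nonneg hw, abs_of_nonneg (add_nonneg hu hw), add_comm]

lemma sum_abs_sub_rpow_add_abs_add_rpow_le {G : Type*} [AddGroup G] [Fintype G] {p : ℝ}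
    (hp : 2 ≤ p) (g : G) (y : G → ℝ) (i₀ : G) :
    ∑ i, (|y i - y (i + g)| ^ p + |y i + y (i + g)| ^ p) ≤
      2 ^ p * ∑ i, |y i| ^ p - clarksonDeficit p |y i₀| |y (i₀ + g)| := by
  have hedge : ∀ i, |y i - y (i + g)| ^ p + |y i + y (i + g)| ^ p
      + clarksonDeficit p |y i| |y (i + g)| ≤ 2 ^ (p - 1) * (|y i| ^ p + |y (i + g)| ^ p) := by
    intro i
    rw [abs_sub_rpow_add_abs_add_rpow]
    exact add_rpow_add_abs_sub_rpow_add_clarksonDeficit_le hp (abs_nonneg _) (abs_nonneg _)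
  have hshift : ∑ i, |y (i + g)| ^ p = ∑ i, |y i| ^ p :=
    Fintype.sum_equiv (Equiv.addRight g) _ _ fun _ => rfl
  have h2 : (2 : ℝ) ^ p = 2 * 2 ^ (p - 1) := by
    rw [Real.rpow_sub_one two_ne_zero]
    ring
  calc ∑ i, (|y i - y (i + g)| ^ p + |y i + y (i + g)| ^ p)
      ≤ ∑ i, (2 ^ (p - 1) * (|y i| ^ p + |y (i + g)| ^ p)
          - clarksonDeficit p |y i| |y (i + g)|) :=
        sum_le_sum fun i _ => by linarith [hedge i]
    _ = 2 ^ p * ∑ i, |y i| ^ p - ∑ i, clarksonDeficit p |y i| |y (i + g)| := by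
        rw [sum_sub_distrib, ← mul_sum, sum_add_distrib, hshift, h2]
        ring
    _ ≤ _ := by
        gcongr
        exact single_le_sum (f := fun i => clarksonDeficit p |y i| |y (i + g)|)
          (fun i _ => clarksonDeficit_nonneg hp (abs_nonneg _) (abs_nonneg _)) (mem_univ i₀)

lemma four_mul_sq_div_le_clarksonDeficit {p a b d : ℝ} (hp : 2 ≤ p) (ha : 1 / 2 ≤ a)
    (hb : 0 ≤ b) (hd : 0 ≤ d) (hdab : d ≤ a - b) :
    4 * (p - 2) * d ^ 2 / 2 ^ p ≤ clarksonDeficit p a b := by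
  have hmean : (2 : ℝ) ^ p * (1 / 4) ^ (p - 2) = 16 / 2 ^ p := by
    rw [one_div, Real.inv_rpow (by norm_num), show (4 : ℝ) = 2 ^ (2 : ℝ) by norm_num,
      ← Real.rpow_mul zero_le_two, ← Real.rpow_neg zero_le_two, ← Real.rpow_add two_pos,
      show p + -(2 * (p - 2)) = 4 - p by ring, Real.rpow_sub two_pos]
    norm_num
  have h1 : 16 / 2 ^ p ≤ 2 ^ p * ((a + b) / 2) ^ (p - 2) := by
    rw [← hmean]
    exact mul_le_mul_of_nonneg_left (Real.rpow_le_rpow (by norm_num) (by linarith) (by linarith))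
      (by positivity)
  have h2 : d ^ 2 / 4 ≤ ((a - b) / 2) ^ 2 := by
    rw [div_pow]
    gcongr
    norm_num
  have h3 : 0 ≤ p - 2 := by linarith
  calc 4 * (p - 2) * d ^ 2 / 2 ^ p = (p - 2) * (16 / 2 ^ p * (d ^ 2 / 4)) := by ring
    _ ≤ (p - 2) * (2 ^ p * ((a + b) / 2) ^ (p - 2) * ((a - b) / 2) ^ 2) := by gcongr
    _ = clarksonDeficit p a b := by unfold clarksonDeficit; ring

lemma sum_ite_ite_mul {ι : Type*} [Fintype ι] [DecidableEq ι] {i k : ι} (hik : i ≠ k) (a : ℝ)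
    (y : ι → ℝ) : ∑ j, (if j = i then 1 else if j = k then a else 0) * y j = y i + a * y k := by
  rw [Fintype.sum_eq_add i k hik fun j hj => by simp [hj.1, hj.2]]
  simp [hik.symm]

lemma sum_abs_sum_mul_rpow_eq_sum {G : Type*} [AddGroup G] [Fintype G] [DecidableEq G] {g : G}
    (hg : g ≠ 0) (A : Matrix (G × Fin 2) G ℝ)
    (hA : ∀ i j, A (i, 0) j = (if j = i then 1 else if j = i + g then -1 else 0) ∧
      A (i, 1) j = (if j = i then 1 else if j = i + g then 1 else 0))
    (y : G → ℝ) (p : ℝ) :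
    ∑ r, |∑ j, A r j * y j| ^ p = ∑ i, (|y i - y (i + g)| ^ p + |y i + y (i + g)| ^ p) := by
  have hig : ∀ i : G, i ≠ i + g := fun i => by simpa [eq_comm] using hg
  refine (Fintype.sum_prod_type _).trans (sum_congr rfl fun i _ => ?_)
  simp only [Fin.sum_univ_two, (hA i _).1, (hA i _).2, sum_ite_ite_mul (hig i)]
  ring_nf

lemma exists_sub_lt_and_div_le_sub_succ (v : ℕ → ℝ) {L : ℕ} {c : ℝ} (hc : 0 < c)
    (hL : v L ≤ v 0 - c) : ∃ u < L, v 0 - c < v u ∧ c / L ≤ v u - v (u + 1) := by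
  classical
  have hex : ∃ T, v T ≤ v 0 - c := ⟨L, hL⟩
  -- Stop at the first index `T` where `v` has dropped by `c`; the drop is spread over `T ≤ L`
  -- steps, all starting above `v 0 - c`.
  set T := Nat.find hex
  have hTL : T ≤ L := Nat.find_min' hex hL
  have hT0 : 0 < T := (Nat.find_pos hex).2 (by linarith)
  have hdrop : ∑ _u ∈ range T, c / T ≤ ∑ u ∈ range T, (v u - v (u + 1)) := by
    rw [sum_range_sub', sum_const, card_range, nsmul_eq_mul, mul_div_cancel₀ _ (by positivity)]
    linarith [Nat.find_spec hex]
  obtain ⟨u, hu, hstep⟩ := exists_le_of_sum_le (nonempty_range_iff.2 hT0.ne') hdrop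
  rw [mem_range] at hu
  refine ⟨u, hu.trans_le hTL, lt_of_not_ge (Nat.find_min hex hu), le_trans ?_ hstep⟩
  gcongr

open Fin.NatCast in
lemma Fin.exists_sub_lt_and_div_le_sub_add_one {n : ℕ} [NeZero n] (s : Fin n → ℝ) {k j : Fin n}
    {c : ℝ} (hc : 0 < c) (hjk : s j ≤ s k - c) : ∃ i, s k - c < s i ∧ c / n ≤ s i - s (i + 1) := by
  obtain ⟨u, hu, hlt, hstep⟩ := exists_sub_lt_and_div_le_sub_succ
    (fun u : ℕ => s (k + (u : Fin n))) hc (L := (j - k).val) (by simpa using hjk)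
  refine ⟨k + (u : Fin n), by simpa using hlt, le_trans ?_ (by simpa [add_assoc] using hstep)⟩
  have : (0 : ℝ) < (j - k).val := by exact_mod_cast (Nat.zero_le u).trans_lt hu
  gcongr
  exact_mod_cast (j - k).isLt.le

lemma exists_le_abs_abs_sub_one {ι : Type*} {c : ℝ} (y : ι → ℝ)
    (hfar : ∀ x : ι → ℝ, (∀ j, x j = 1 ∨ x j = -1) → ∃ j, c ≤ |y j - x j|) :
    ∃ j, c ≤ |(|y j| - 1)| := by
  obtain ⟨j, hj⟩ := hfar (fun j => if 0 ≤ y j then 1 else -1) fun j => by split_ifs <;> simp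
  refine ⟨j, ?_⟩
  split_ifs at hj with h
  · rwa [abs_of_nonneg h]
  · rw [abs_of_neg (not_le.1 h), ← abs_neg, neg_sub, sub_neg_eq_add, add_comm]
    rwa [sub_neg_eq_add] at hj

lemma exists_one_le_and_le_sub {ι : Type*} [Fintype ι] [Nonempty ι] {s : ι → ℝ} {p c : ℝ}
    (hp : 0 < p) (hc : 0 ≤ c) (hs : ∀ i, 0 ≤ s i) (hsum : ∑ i, s i ^ p = Fintype.card ι) {j : ι}
    (hj : c ≤ |s j - 1|) : ∃ k j, 1 ≤ s k ∧ s j ≤ s k - c := by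
  have hcard : ∑ _i : ι, (1 : ℝ) = ∑ i, s i ^ p := by simp [hsum]
  rcases le_abs'.1 hj with hj | hj
  · obtain ⟨k, -, hk⟩ := exists_le_of_sum_le univ_nonempty hcard.le
    have : 1 ≤ s k := by
      by_contra! h
      linarith [Real.rpow_lt_one (hs k) h hp]
    exact ⟨k, j, this, by linarith⟩
  · obtain ⟨k, -, hk⟩ := exists_le_of_sum_le univ_nonempty hcard.ge
    have : s k ≤ 1 := by
      by_contra! h
      linarith [Real.one_lt_rpow h hp]
    exact ⟨j, k, by linarith, by linarith⟩

/-- If `y` lies on the sphere `‖y‖_p^p = n` and is at `∞`-distance at least `c`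
from every sign vector, then `‖Ay‖_p^p ≤ n·2^p - (3(p-2)/(2^p n²)) c²`. -/
theorem stmt_13 (n : ℕ) (hn : 2 ≤ n) (p c : ℝ) (hp : 2 < p) (hc0 : 0 < c) (hc : c ≤ 1 / 2)
    (A : Matrix (Fin n × Fin 2) (Fin n) ℝ)
    (hA : ∀ (i j : Fin n),
      A (i, 0) j = (if j = i then 1 else if j = i + ⟨1, by omega⟩ then -1 else 0) ∧
      A (i, 1) j = (if j = i then 1 else if j = i + ⟨1, by omega⟩ then 1 else 0))
    (y : Fin n → ℝ) (hy : (∑ j, |y j| ^ p) = n)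
    (hfar : ∀ x : Fin n → ℝ, (∀ j, x j = 1 ∨ x j = -1) → ∃ j, c ≤ |y j - x j|) :
    ∑ r, |∑ j, A r j * y j| ^ p ≤
      (n : ℝ) * 2 ^ p - (3 * (p - 2) / (2 ^ p * (n : ℝ) ^ (2 : ℕ))) * c ^ (2 : ℕ) := by
  have : NeZero n := ⟨by omega⟩
  have hone : (⟨1, by omega⟩ : Fin n) = 1 := Fin.ext (Nat.mod_eq_of_lt hn).symm
  obtain ⟨j₁, hj₁⟩ := exists_le_abs_abs_sub_one y hfar
  obtain ⟨k, j, hk, hjk⟩ := exists_one_le_and_le_sub (s := fun i => |y i|) (p := p)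
    (by linarith) hc0.le (fun _ => abs_nonneg _) (by simpa using hy) hj₁
  obtain ⟨i, hi, hstep⟩ := Fin.exists_sub_lt_and_div_le_sub_add_one (fun i => |y i|) hc0 hjk
  have hdeficit := four_mul_sq_div_le_clarksonDeficit hp.le (by linarith) (abs_nonneg _)
    (by positivity) hstep
  simp only [hone] at hA
  rw [sum_abs_sum_mul_rpow_eq_sum (by rw [← hone]; exact Fin.ne_of_val_ne one_ne_zero) A hA]
  calc _ ≤ 2 ^ p * ∑ i, |y i| ^ p - clarksonDeficit p |y i| |y (i + 1)| :=
        sum_abs_sub_rpow_add_abs_add_rpow_le hp.le 1 y i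
    _ ≤ n * 2 ^ p - 4 * (p - 2) / (2 ^ p * (n : ℝ) ^ 2) * c ^ 2 := by
        rw [hy, mul_comm (2 ^ p)]
        convert sub_le_sub_left hdeficit _ using 2
        ring
    _ ≤ _ := by gcongr; norm_num
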